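/- Let (q_n)_{n≥0} satisfy q_0 = 1, q_n > 0, q_{n+1}/q_n ≥ q_n/q_{n−1} for n ≥ 1, and q_n/Q_n → 0, where Q_n = ∑_{k=0}^{n} q_k, and let (γ_n) be defined by γ_0 = 1 and ∑_{k=0}^{n} q_{n−k} γ_k = 0 for n ≥ 1. Fix n and α_n ∈ (0,1), and assume in addition that q_m/q_{m−1} ≤ 1 − (1−α_n)/m for all m ≥ 1. Then b_{m,n} := ∑_{l=0}^{m} A_{m−l}^{α_n−1} γ_l ≥ 0 for every m ≥ 0; consequently, the coefficients t_{k,n} = b_{n−k,n} Q_k / A_n^{α_n} satisfy t_{k,n} ≥ 0 and ∑_{k=0}^{n} |t_{k,n}| = ∑_{k=0}^{n} t_{k,n} = 1. -/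

import Mathlib

open Finset Filter

/-- `A_n^α = (1+α)(2+α)⋯(n+α)/n!`, with `A_0^α = 1`. -/
noncomputable def cesA (n : ℕ) (α : ℝ) : ℝ :=
  (∏ i ∈ Finset.range n, ((i : ℝ) + 1 + α)) / (n.factorial : ℝ)

/-- `Q_n = ∑_{k=0}^n q_k`. -/
noncomputable def bigQ (q : ℕ → ℝ) (n : ℕ) : ℝ := ∑ k ∈ Finset.range (n + 1), q k

/-!
Kaluza's argument. For `m ≥ 1` the recurrence reads `∑_{l=1}^{m} q_{m-l} γ_l = -q_m`, so if
`γ_1, …, γ_m ≤ 0` and `c / q` is nondecreasing, then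
`∑_{l=0}^{m} c_{m-l} γ_l ≥ c_m - (c_m / q_m) q_m = 0`. For `c_j = q_{j+1}` (log-convexity of `q`)
this sum is `-γ_{m+1}`, so by induction `γ_l ≤ 0` for all `l ≥ 1`; for `c = A^{a-1}` (the condition
on `q_m / q_{m-1}`) it is `b_m`. Finally, as power series, `∑ b_m x^m = (1-x)^{-a} / ∑ q_n x^n` and
`∑ Q_k x^k = (1-x)^{-1} ∑ q_n x^n`, so `∑_k b_{n-k} Q_k = A_n^a`.
-/

theorem cesA_zero (α : ℝ) : cesA 0 α = 1 := by
  simp [cesA]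

theorem cesA_succ (n : ℕ) (α : ℝ) :
    cesA (n + 1) α = cesA n α * ((n + 1 + α) / (n + 1)) := by
  rw [cesA, cesA, prod_range_succ, Nat.factorial_succ]
  push_cast
  field_simp

theorem cesA_pos (n : ℕ) {α : ℝ} (hα : -1 < α) : 0 < cesA n α := by
  refine div_pos (prod_pos fun i _ => ?_) (by positivity)
  linarith [(Nat.cast_nonneg i : (0 : ℝ) ≤ i)]

theorem add_mul_cesA_sub_one (n : ℕ) (α : ℝ) :
    (n + α) * cesA n (α - 1) = α * cesA n α := by
  induction n with
  | zero => simp [cesA_zero]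
  | succ n ih =>
    rw [cesA_succ, cesA_succ]
    push_cast
    linear_combination (n + 1 + α) / (n + 1) * ih

theorem sum_range_cesA_sub_one (n : ℕ) (α : ℝ) :
    ∑ i ∈ range (n + 1), cesA i (α - 1) = cesA n α := by
  induction n with
  | zero => simp [cesA_zero]
  | succ n ih =>
    rw [sum_range_succ, ih, cesA_succ, cesA_succ]
    field_simp
    linear_combination add_mul_cesA_sub_one n α

theorem bigQ_pos {q : ℕ → ℝ} (hq : ∀ m, 0 < q m) (n : ℕ) : 0 < bigQ q n :=
  sum_pos (fun i _ => hq i) nonempty_range_add_one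

theorem coeff_mk_mul_mk (f g : ℕ → ℝ) (n : ℕ) :
    PowerSeries.coeff n (PowerSeries.mk f * PowerSeries.mk g)
      = ∑ k ∈ range (n + 1), f k * g (n - k) := by
  rw [PowerSeries.coeff_mul, Nat.sum_antidiagonal_eq_sum_range_succ_mk]
  simp only [PowerSeries.coeff_mk]

theorem monotone_div_of_ratio_le {c q : ℕ → ℝ} (hc : ∀ k, 0 < c k) (hq : ∀ k, 0 < q k)
    (h : ∀ k, q (k + 1) / q k ≤ c (k + 1) / c k) : Monotone fun k => c k / q k := by
  refine monotone_nat_of_le_succ fun k => ?_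
  have hk := h k
  rw [div_le_div_iff₀ (hq k) (hc k)] at hk
  rw [div_le_div_iff₀ (hq k) (hq (k + 1))]
  linarith

section Reciprocal

variable {q γ : ℕ → ℝ}

theorem sum_range_mul_reciprocal_succ (hγ0 : γ 0 = 1)
    (hγ : ∀ m, 1 ≤ m → ∑ k ∈ range (m + 1), q (m - k) * γ k = 0) (m : ℕ) :
    ∑ l ∈ range (m + 1), q (m - l) * γ (l + 1) = -q (m + 1) := by
  have h := hγ (m + 1) (by omega)
  rw [sum_range_succ'] at h
  simp only [Nat.add_sub_add_right, Nat.sub_zero, hγ0, mul_one] at h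
  linarith

theorem sum_mul_reciprocal_nonneg (hγ0 : γ 0 = 1)
    (hγ : ∀ m, 1 ≤ m → ∑ k ∈ range (m + 1), q (m - k) * γ k = 0) {c : ℕ → ℝ}
    (hq : ∀ j, 0 < q j) (hcq : Monotone fun j => c j / q j) {m : ℕ}
    (hγm : ∀ l ≤ m, γ (l + 1) ≤ 0) :
    0 ≤ ∑ l ∈ range (m + 2), c (m + 1 - l) * γ l := by
  set r := c (m + 1) / q (m + 1)
  have hcr : ∀ l ∈ range (m + 1), r * q (m - l) * γ (l + 1) ≤ c (m - l) * γ (l + 1) := by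
    intro l hl
    refine mul_le_mul_of_nonpos_right ?_ (hγm l (Nat.lt_succ_iff.mp (mem_range.mp hl)))
    rw [← div_le_iff₀ (hq _)]
    exact hcq (by omega)
  have hsum := sum_le_sum hcr
  simp only [mul_assoc, ← mul_sum, sum_range_mul_reciprocal_succ hγ0 hγ] at hsum
  have hr : r * q (m + 1) = c (m + 1) := div_mul_cancel₀ _ (hq _).ne'
  rw [sum_range_succ']
  simp only [Nat.add_sub_add_right, Nat.sub_zero, hγ0, mul_one]
  linarith

theorem reciprocal_succ_nonpos (hq0 : q 0 = 1) (hq : ∀ j, 0 < q j)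
    (hlogconv : Monotone fun j => q (j + 1) / q j) (hγ0 : γ 0 = 1)
    (hγ : ∀ m, 1 ≤ m → ∑ k ∈ range (m + 1), q (m - k) * γ k = 0) (m : ℕ) :
    γ (m + 1) ≤ 0 := by
  induction m using Nat.strong_induction_on with
  | _ m ih =>
    rcases m with _ | m
    · have h := sum_range_mul_reciprocal_succ hγ0 hγ 0
      simp only [zero_add, sum_range_one, Nat.sub_zero, hq0, one_mul] at h ⊢
      linarith [hq 1]
    · have hrest := sum_mul_reciprocal_nonneg hγ0 hγ hq hlogconv
        (m := m) fun l hl => ih l (by omega)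
      have h := hγ (m + 2) (by omega)
      rw [sum_range_succ, Nat.sub_self, hq0, one_mul] at h
      have hshift : ∑ l ∈ range (m + 2), q (m + 1 - l + 1) * γ l
          = ∑ l ∈ range (m + 2), q (m + 2 - l) * γ l :=
        sum_congr rfl fun l hl => by
          rw [mem_range] at hl
          rw [show m + 1 - l + 1 = m + 2 - l by omega]
      linarith

end Reciprocal

theorem sum_cesA_conv_mul_bigQ {q γ : ℕ → ℝ} (hq0 : q 0 = 1) (hγ0 : γ 0 = 1)
    (hγ : ∀ m, 1 ≤ m → ∑ k ∈ range (m + 1), q (m - k) * γ k = 0) (a : ℝ) (n : ℕ) :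
    ∑ k ∈ range (n + 1),
        (∑ l ∈ range (n - k + 1), cesA (n - k - l) (a - 1) * γ l) * bigQ q k = cesA n a := by
  set B : ℕ → ℝ := fun m => ∑ l ∈ range (m + 1), cesA (m - l) (a - 1) * γ l
  have hγq : PowerSeries.mk γ * PowerSeries.mk q = 1 := by
    ext m
    rw [coeff_mk_mul_mk, PowerSeries.coeff_one]
    rcases m with _ | m
    · simp [hγ0, hq0]
    · rw [if_neg m.succ_ne_zero, ← hγ (m + 1) (by omega)]
      exact sum_congr rfl fun k _ => mul_comm _ _
  have hQ : PowerSeries.mk (bigQ q) = PowerSeries.mk q * PowerSeries.mk 1 := by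
    ext m
    simp [coeff_mk_mul_mk, bigQ]
  have hB : PowerSeries.mk B = PowerSeries.mk γ * PowerSeries.mk (cesA · (a - 1)) := by
    ext m
    rw [coeff_mk_mul_mk, PowerSeries.coeff_mk]
    exact sum_congr rfl fun k _ => mul_comm _ _
  have hA : PowerSeries.mk (cesA · (a - 1)) * PowerSeries.mk 1 = PowerSeries.mk (cesA · a) := by
    ext m
    simp [coeff_mk_mul_mk, sum_range_cesA_sub_one]
  have hQB : PowerSeries.mk (bigQ q) * PowerSeries.mk B = PowerSeries.mk (cesA · a) := by
    rw [hQ, hB, ← hA]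
    calc _ = PowerSeries.mk γ * PowerSeries.mk q *
          (PowerSeries.mk (cesA · (a - 1)) * PowerSeries.mk 1) := by ring
      _ = _ := by rw [hγq, one_mul]
  have h := congrArg (PowerSeries.coeff n) hQB
  rw [coeff_mk_mul_mk, PowerSeries.coeff_mk] at h
  rw [← h]
  exact sum_congr rfl fun k _ => mul_comm _ _

theorem matrix_coefficients_nonneg_and_sum_one_general
    (q : ℕ → ℝ) (hq0 : q 0 = 1) (hqpos : ∀ m, 0 < q m)
    (hqconv : ∀ m, 1 ≤ m → q m / q (m - 1) ≤ q (m + 1) / q m)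
    (γ : ℕ → ℝ) (hγ0 : γ 0 = 1)
    (hγ : ∀ m, 1 ≤ m → ∑ k ∈ Finset.range (m + 1), q (m - k) * γ k = 0)
    (n : ℕ) (a : ℝ) (ha : a ∈ Set.Ioo (0 : ℝ) 1)
    (hcond : ∀ m : ℕ, 1 ≤ m → q m / q (m - 1) ≤ 1 - (1 - a) / m)
    (b : ℕ → ℝ) (hb : ∀ m, b m = ∑ l ∈ Finset.range (m + 1), cesA (m - l) (a - 1) * γ l)
    (t : ℕ → ℝ) (ht : ∀ k, t k = b (n - k) * bigQ q k / cesA n a) :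
    (∀ m, 0 ≤ b m) ∧ (∀ k ∈ Finset.range (n + 1), 0 ≤ t k) ∧
      (∑ k ∈ Finset.range (n + 1), |t k| = ∑ k ∈ Finset.range (n + 1), t k) ∧
      (∑ k ∈ Finset.range (n + 1), t k = 1) := by
  obtain ⟨ha0, -⟩ := ha
  have hA : ∀ m, 0 < cesA m (a - 1) := fun m => cesA_pos m (by linarith)
  have hγ_nonpos : ∀ l, γ (l + 1) ≤ 0 := reciprocal_succ_nonpos hq0 hqpos
    (monotone_nat_of_le_succ fun m => by simpa using hqconv (m + 1) (by omega)) hγ0 hγ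
  have hAq : Monotone fun k => cesA k (a - 1) / q k := by
    refine monotone_div_of_ratio_le hA hqpos fun k => ?_
    rw [cesA_succ, mul_div_cancel_left₀ _ (hA k).ne']
    convert hcond (k + 1) (by omega) using 1
    · simp
    · push_cast
      field_simp
      ring
  have hb_nonneg : ∀ m, 0 ≤ b m := by
    rintro (_ | m)
    · simp [hb, cesA_zero, hγ0]
    · rw [hb]
      exact sum_mul_reciprocal_nonneg hγ0 hγ hqpos hAq fun l _ => hγ_nonpos l
  have hAn : 0 < cesA n a := cesA_pos n (by linarith)
  have ht_nonneg : ∀ k, 0 ≤ t k := fun k => by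
    rw [ht]
    exact div_nonneg (mul_nonneg (hb_nonneg _) (bigQ_pos hqpos k).le) hAn.le
  refine ⟨hb_nonneg, fun k _ => ht_nonneg k,
    sum_congr rfl fun k _ => abs_of_nonneg (ht_nonneg k), ?_⟩
  simp only [ht, ← sum_div, hb, sum_cesA_conv_mul_bigQ hq0 hγ0 hγ]
  exact div_self hAn.ne'

/-- Under the Hardy-type conditions on `(q_n)` and the compatibility condition
`q_m/q_{m-1} ≤ 1 - (1-α_n)/m`, the coefficients
`b_{m,n} = ∑_{l=0}^m A_{m-l}^{α_n-1} γ_l` are nonnegative; consequently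
`t_{k,n} = b_{n-k,n} Q_k / A_n^{α_n}` satisfy `t_{k,n} ≥ 0` and
`∑_{k=0}^n |t_{k,n}| = ∑_{k=0}^n t_{k,n} = 1`. -/
theorem matrix_coefficients_nonneg_and_sum_one
    (q : ℕ → ℝ) (hq0 : q 0 = 1) (hqpos : ∀ m, 0 < q m)
    (hqconv : ∀ m, 1 ≤ m → q m / q (m - 1) ≤ q (m + 1) / q m)
    (hqQ : Filter.Tendsto (fun m => q m / bigQ q m) Filter.atTop (nhds 0))
    (γ : ℕ → ℝ) (hγ0 : γ 0 = 1)
    (hγ : ∀ m, 1 ≤ m → ∑ k ∈ Finset.range (m + 1), q (m - k) * γ k = 0)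
    (n : ℕ) (a : ℝ) (ha : a ∈ Set.Ioo (0 : ℝ) 1)
    (hcond : ∀ m : ℕ, 1 ≤ m → q m / q (m - 1) ≤ 1 - (1 - a) / m)
    (b : ℕ → ℝ) (hb : ∀ m, b m = ∑ l ∈ Finset.range (m + 1), cesA (m - l) (a - 1) * γ l)
    (t : ℕ → ℝ) (ht : ∀ k, t k = b (n - k) * bigQ q k / cesA n a) :
    (∀ m, 0 ≤ b m) ∧ (∀ k ∈ Finset.range (n + 1), 0 ≤ t k) ∧
      (∑ k ∈ Finset.range (n + 1), |t k| = ∑ k ∈ Finset.range (n + 1), t k) ∧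
      (∑ k ∈ Finset.range (n + 1), t k = 1) :=
  matrix_coefficients_nonneg_and_sum_one_general q hq0 hqpos hqconv γ hγ0 hγ n a ha hcond b hb t ht
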